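/- Let A be a Banach algebra over ℂ, η an infinite cardinal, m a positive integer, and X₁, …, X_m subsets of A** each of cardinality at least η. Assume (a) A has the η-Mazur property, and (b) the right η-factorization property holds: for every family (S_λ)_{λ<η} in A* with sup_λ ‖S_λ‖ < ∞ there exist a family (Ψ_{λ,k})_{λ<η, 1≤k≤m} in A** with sup_{λ,k} ‖Ψ_{λ,k}‖ < ∞ and (Ψ_{λ,1}, …, Ψ_{λ,m}) ∈ X₁ × ⋯ × X_m for each λ, and functionals T₁, …, T_m ∈ A*, such that S_λ = ∑_{k=1}^m Ψ_{λ,k}⊙T_k for all λ < η. Then: (1) for every weak*-closed subset 𝒮 of A** that is closed under the second Arens product ◇ and contains ⋃_{k=1}^m X_k, the set {Φ ∈ 𝒮 : the map Ψ ↦ Ψ◇Φ from 𝒮 to 𝒮 is continuous for the weak* topology} equals 𝒮 ∩ J(A); (2) in particular, {Φ ∈ A** : the map Ψ ↦ Ψ◇Φ from A** to A** is weak*–weak* continuous} = J(A), i.e. A is right strongly Arens irregular. -/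

import Mathlib

/-!
STATEMENT 5.  `A` a Banach algebra over `ℂ`, `η` an infinite cardinal, `m ≥ 1`,
`X₁, …, X_m ⊆ A**` each of cardinality at least `η`.  Assume `A` has the `η`-Mazur
property and `A*` has the right `η`-factorization property through `X₁ × ⋯ × X_m`
(with respect to the actions `S⊙a`, `Φ⊙S`).  Then:
(1) for every weak*-closed subset `𝒮` of `A**` closed under the second Arens product
`◇` and containing `⋃ k, X k`, the set
`{Φ ∈ 𝒮 : Ψ ↦ Ψ ◇ Φ is weak*-continuous on 𝒮}` equals `𝒮 ∩ J(A)`;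
(2) in particular `{Φ : Ψ ↦ Ψ ◇ Φ weak*-weak*-continuous} = J(A)`,
i.e. `A` is right strongly Arens irregular.
-/

noncomputable section

open ContinuousLinearMap

universe u

variable (A : Type u) [NonUnitalNormedRing A] [NormedSpace ℂ A]
  [IsScalarTower ℂ A A] [SMulCommClass ℂ A A]

/-- The continuous linear map `S ↦ (a ↦ S⊙a)`, where `(S⊙a)(b) = S (b * a)`. -/
def dOdotL : (A →L[ℂ] ℂ) →L[ℂ] A →L[ℂ] A →L[ℂ] ℂ :=
  (((compL ℂ A (A →L[ℂ] A) (A →L[ℂ] ℂ)).comp (compL ℂ A A ℂ)).flip)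
    ((ContinuousLinearMap.mul ℂ A).flip)

/-- The action `Φ⊙S` of the bidual on the dual: `(Φ⊙S)(a) = Φ (S⊙a)`. -/
def biOdot (Φ : (A →L[ℂ] ℂ) →L[ℂ] ℂ) (S : A →L[ℂ] ℂ) : A →L[ℂ] ℂ :=
  Φ.comp (dOdotL A S)

/-- The second Arens product on the bidual: `(Φ ◇ Ψ)(S) = Ψ (Φ⊙S)`. -/
def arens2 (Φ Ψ : (A →L[ℂ] ℂ) →L[ℂ] ℂ) : (A →L[ℂ] ℂ) →L[ℂ] ℂ :=
  Ψ.comp ((compL ℂ A (A →L[ℂ] ℂ) ℂ Φ).comp (dOdotL A))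

/-- The canonical isometric embedding of `A` in its bidual. -/
def Jmap : A →L[ℂ] ((A →L[ℂ] ℂ) →L[ℂ] ℂ) := ContinuousLinearMap.apply ℂ ℂ

/-- The weak-star topology on the bidual of `A`: the topology of pointwise
convergence on `A*`. -/
def wstar : TopologicalSpace ((A →L[ℂ] ℂ) →L[ℂ] ℂ) :=
  TopologicalSpace.induced (fun Φ => (Φ : (A →L[ℂ] ℂ) → ℂ)) inferInstance

set_option linter.unusedSectionVars false
section Aux
variable {A : Type u} [NonUnitalNormedRing A] [NormedSpace ℂ A]
  [IsScalarTower ℂ A A] [SMulCommClass ℂ A A]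

lemma arens2_apply (Φ Ψ : (A →L[ℂ] ℂ) →L[ℂ] ℂ) (S : A →L[ℂ] ℂ) :
    arens2 A Φ Ψ S = Ψ (biOdot A Φ S) := rfl

lemma biOdot_apply (Φ : (A →L[ℂ] ℂ) →L[ℂ] ℂ) (S : A →L[ℂ] ℂ) (a : A) :
    biOdot A Φ S a = Φ (dOdotL A S a) := rfl

lemma cont_eval (T : A →L[ℂ] ℂ) :
    @Continuous _ _ (wstar A) _ (fun Φ : (A →L[ℂ] ℂ) →L[ℂ] ℂ => Φ T) :=
  WeakDual.eval_continuous (𝕜 := ℂ) (E := A →L[ℂ] ℂ) T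

lemma cont_J (a : A) :
    @Continuous _ _ (wstar A) (wstar A) (fun Ψ => arens2 A Ψ (Jmap A a)) := by
  letI := wstar A
  refine continuous_induced_rng.2 (continuous_pi fun S => ?_)
  exact cont_eval (dOdotL A S a)

lemma compact_ball (C : ℝ) :
    @IsCompact ((A →L[ℂ] ℂ) →L[ℂ] ℂ) (wstar A) {Ψ | ‖Ψ‖ ≤ C} := by
  have h := WeakDual.isCompact_closedBall (𝕜 := ℂ) (E := A →L[ℂ] ℂ) 0 C
  have hset : (WeakDual.toStrongDual ⁻¹' Metric.closedBall 0 C :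
      Set (WeakDual ℂ (A →L[ℂ] ℂ))) = {Ψ : (A →L[ℂ] ℂ) →L[ℂ] ℂ | ‖Ψ‖ ≤ C} := by
    ext x
    simp only [Set.mem_preimage, mem_closedBall_zero_iff]
    exact mem_closedBall_zero_iff (E := (A →L[ℂ] ℂ) →L[ℂ] ℂ)
  rw [hset] at h
  exact h

end Aux

theorem stmt5
    {A : Type u} [NonUnitalNormedRing A] [NormedSpace ℂ A]
    [IsScalarTower ℂ A A] [SMulCommClass ℂ A A] [CompleteSpace A]
    (η : Cardinal.{u}) (hη : Cardinal.aleph0 ≤ η)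
    (m : ℕ) (hm : 0 < m)
    (X : Fin m → Set ((A →L[ℂ] ℂ) →L[ℂ] ℂ))
    (hX : ∀ k, η ≤ Cardinal.mk (X k))
    -- the `η`-Mazur property of `A`
    (hMazur : ∀ Φ : (A →L[ℂ] ℂ) →L[ℂ] ℂ,
      (∀ (D : Type u) [Preorder D] [IsDirected D (· ≤ ·)] [Nonempty D],
        Cardinal.mk D ≤ η →
        ∀ S : D → A →L[ℂ] ℂ, (∀ d, ‖S d‖ ≤ 1) →
          (∀ a : A, Filter.Tendsto (fun d => S d a) Filter.atTop (nhds (0 : ℂ))) →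
          Filter.Tendsto (fun d => Φ (S d)) Filter.atTop (nhds (0 : ℂ))) →
      Φ ∈ Set.range fun a : A => Jmap A a)
    -- the right `η`-factorization property of `A*` through `X₁ × ⋯ × X_m`
    (ι : Type u) (hι : Cardinal.mk ι = η)
    (hFact : ∀ S : ι → A →L[ℂ] ℂ, (∃ C : ℝ, ∀ lam, ‖S lam‖ ≤ C) →
      ∃ (Ψ : ι → Fin m → (A →L[ℂ] ℂ) →L[ℂ] ℂ) (T : Fin m → A →L[ℂ] ℂ),
        (∃ C : ℝ, ∀ lam k, ‖Ψ lam k‖ ≤ C) ∧ (∀ lam k, Ψ lam k ∈ X k) ∧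
        ∀ lam, S lam = ∑ k, biOdot A (Ψ lam k) (T k)) :
    (∀ 𝒮 : Set ((A →L[ℂ] ℂ) →L[ℂ] ℂ),
        @IsClosed _ (wstar A) 𝒮 →
        (∀ Φ ∈ 𝒮, ∀ Ψ ∈ 𝒮, arens2 A Φ Ψ ∈ 𝒮) →
        (∀ k, X k ⊆ 𝒮) →
        {Φ | Φ ∈ 𝒮 ∧
            @ContinuousOn _ _ (wstar A) (wstar A) (fun Ψ => arens2 A Ψ Φ) 𝒮}
          = 𝒮 ∩ Set.range fun a : A => Jmap A a)
    ∧ {Φ : (A →L[ℂ] ℂ) →L[ℂ] ℂ |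
          @Continuous _ _ (wstar A) (wstar A) fun Ψ => arens2 A Ψ Φ}
        = Set.range fun a : A => Jmap A a := by
  classical
  have part1 : ∀ 𝒮 : Set ((A →L[ℂ] ℂ) →L[ℂ] ℂ),
      @IsClosed _ (wstar A) 𝒮 →
      (∀ Φ ∈ 𝒮, ∀ Ψ ∈ 𝒮, arens2 A Φ Ψ ∈ 𝒮) →
      (∀ k, X k ⊆ 𝒮) →
      {Φ | Φ ∈ 𝒮 ∧
          @ContinuousOn _ _ (wstar A) (wstar A) (fun Ψ => arens2 A Ψ Φ) 𝒮}
        = 𝒮 ∩ Set.range fun a : A => Jmap A a := by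
    intro 𝒮 hcl _hmul hXS
    letI := wstar A
    ext Φ
    simp only [Set.mem_setOf_eq, Set.mem_inter_iff]
    constructor
    · rintro ⟨hΦS, hcont⟩
      refine ⟨hΦS, hMazur Φ ?_⟩
      intro D _ _ _ hD S hS1 hS0
      -- extend the net to a family indexed by ι
      obtain ⟨e⟩ : Nonempty (D ↪ ι) := by
        rw [← Cardinal.le_def, hι]; exact hD
      set S' : ι → A →L[ℂ] ℂ := Function.extend e S (fun _ => 0) with hS'def
      have hS'b : ∀ lam, ‖S' lam‖ ≤ 1 := by
        intro lam
        rw [hS'def, Function.extend_def]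
        split
        · exact hS1 _
        · simp
      obtain ⟨Ψ, T, ⟨C, hC⟩, hΨX, hfac⟩ := hFact S' ⟨1, hS'b⟩
      have hSd : ∀ d, S d = ∑ k, biOdot A (Ψ (e d) k) (T k) := fun d => by
        rw [← e.injective.extend_apply S (fun _ => 0) d]
        exact hfac (e d)
      rw [Filter.tendsto_iff_ultrafilter]
      intro U hU
      -- weak* limits of the nets (Ψ (e d) k)_d along the ultrafilter
      have hΘ : ∀ k : Fin m, ∃ Θ : (A →L[ℂ] ℂ) →L[ℂ] ℂ,
          Filter.Tendsto (fun d => Ψ (e d) k) (U : Filter D) (nhds Θ) := by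
        intro k
        have hle : (↑(U.map fun d => Ψ (e d) k) : Filter _) ≤
            Filter.principal {Ψ' : (A →L[ℂ] ℂ) →L[ℂ] ℂ | ‖Ψ'‖ ≤ C} := by
          rw [Ultrafilter.coe_map, Filter.le_principal_iff, Filter.mem_map]
          exact Filter.univ_mem' fun d => hC (e d) k
        obtain ⟨Θ, _, hle'⟩ := (compact_ball C).ultrafilter_le_nhds
          (U.map fun d => Ψ (e d) k) hle
        exact ⟨Θ, hle'⟩
      choose Θ hΘt using hΘ
      have hΘS : ∀ k, Θ k ∈ 𝒮 := fun k =>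
        hcl.mem_of_tendsto (hΘt k)
          (Filter.Eventually.of_forall fun d => hXS k (hΨX (e d) k))
      -- ∑ₖ Θ k ⊙ T k = 0
      have hsum0 : ∑ k, biOdot A (Θ k) (T k) = 0 := by
        ext a
        have h1 : Filter.Tendsto (fun d => S d a) (U : Filter D) (nhds 0) :=
          (hS0 a).mono_left hU
        have h2 : Filter.Tendsto (fun d => S d a) (U : Filter D)
            (nhds (∑ k, Θ k (dOdotL A (T k) a))) := by
          have he : ∀ d, S d a = ∑ k, Ψ (e d) k (dOdotL A (T k) a) := by
            intro d
            rw [hSd d, ContinuousLinearMap.sum_apply]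
            rfl
          simp only [he]
          exact tendsto_finset_sum _ fun k _ =>
            ((cont_eval (dOdotL A (T k) a)).tendsto _).comp (hΘt k)
        have := tendsto_nhds_unique h2 h1
        simpa [biOdot_apply] using this
      -- conclude
      have heq : ∀ d, Φ (S d) = ∑ k, arens2 A (Ψ (e d) k) Φ (T k) := by
        intro d
        rw [hSd d, map_sum]
        rfl
      have hlim : Filter.Tendsto (fun d => Φ (S d)) (U : Filter D)
          (nhds (∑ k, arens2 A (Θ k) Φ (T k))) := by
        simp only [heq]
        refine tendsto_finset_sum _ fun k _ => ?_
        have hck : Filter.Tendsto (fun Ψ' => arens2 A Ψ' Φ)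
            (nhdsWithin (Θ k) 𝒮) (nhds (arens2 A (Θ k) Φ)) := hcont (Θ k) (hΘS k)
        have hin : Filter.Tendsto (fun d => Ψ (e d) k) (U : Filter D)
            (nhdsWithin (Θ k) 𝒮) := by
          rw [tendsto_nhdsWithin_iff]
          exact ⟨hΘt k, Filter.Eventually.of_forall fun d => hXS k (hΨX (e d) k)⟩
        exact ((cont_eval (T k)).tendsto _).comp (hck.comp hin)
      have hz : ∑ k, arens2 A (Θ k) Φ (T k) = 0 := by
        have : ∑ k, arens2 A (Θ k) Φ (T k) = Φ (∑ k, biOdot A (Θ k) (T k)) := by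
          rw [map_sum]
          rfl
        rw [this, hsum0, map_zero]
      rwa [hz] at hlim
    · rintro ⟨hΦS, a, rfl⟩
      exact ⟨hΦS, (cont_J a).continuousOn⟩
  refine ⟨part1, ?_⟩
  have h2 := part1 Set.univ (@isClosed_univ _ (wstar A)) (fun _ _ _ _ => Set.mem_univ _)
    (fun k => Set.subset_univ _)
  rw [Set.univ_inter] at h2
  rw [← h2]
  ext Φ
  simp only [Set.mem_setOf_eq, Set.mem_univ, true_and]
  exact (@continuousOn_univ _ _ (wstar A) (wstar A) _).symm
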